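/- Suppose n ≥ 2 and for each task q there is a unique dominating agent i* q, i.e., f (i* q) q > f j q for every agent j ≠ i* q. Let γ̲ = min_{i,q} γ i q > 0 and δ = min_q (f (i* q) q − max_{j ≠ i* q} f j q) > 0, and let W̄ be the matrix with W̄ i q = 1 if i = i* q and W̄ i q = 0 otherwise. Then every PBRAG trajectory W satisfies W t i q = W̄ i q for all agents i, all tasks q, and all t ≥ 2 * ⌈1 / (γ̲ * δ)⌉. -/

import Mathlib

open Finset Filter

noncomputable def fsMax (s : Finset ℝ) : ℝ := WithBot.unbotD 0 s.max

noncomputable def fsMin (s : Finset ℝ) : ℝ := WithTop.untopD 0 s.min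

noncomputable def fsSubmax (s : Finset ℝ) : ℝ := fsMax (s.filter (fun x => x < fsMax s))

/-- Agent `i` is dominating for task `q`. -/
def Dominating {n m : ℕ} (f : Fin n → Fin m → ℝ) (i : Fin n) (q : Fin m) : Prop :=
  ∀ j, f j q ≤ f i q

/-- Maximum of `g j` over all `j ≠ i` (0 if that set is empty). -/
noncomputable def maxErase {n : ℕ} (i : Fin n) (g : Fin n → ℝ) : ℝ :=
  fsMax ((Finset.univ.erase i).image g)

/-- Utility of agent `i` in the weight game. -/
noncomputable def Uutil {n m : ℕ} (f : Fin n → Fin m → ℝ) (w : Fin n → Fin m → ℝ)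
    (i : Fin n) : ℝ :=
  ∑ q, (f i q * w i q - maxErase i (fun j => f j q * w j q) * w i q)

/-- All entries of the matrix lie in `[0,1]`. -/
def InUnit {n m : ℕ} (w : Fin n → Fin m → ℝ) : Prop :=
  ∀ i q, w i q ∈ Set.Icc (0 : ℝ) 1

/-- Nash equilibrium of the weight game. -/
def IsNashW {n m : ℕ} (f : Fin n → Fin m → ℝ) (w : Fin n → Fin m → ℝ) : Prop :=
  ∀ i, ∀ w' : Fin m → ℝ, (∀ q, w' q ∈ Set.Icc (0 : ℝ) 1) →
    Uutil f (Function.update w i w') i ≤ Uutil f w i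

noncomputable def clamp (x : ℝ) : ℝ := max 0 (min x 1)

/-- One step of the projected best-response ascending gradient dynamics. -/
noncomputable def pbrag {n m : ℕ} (f γ : Fin n → Fin m → ℝ)
    (w : Fin n → Fin m → ℝ) : Fin n → Fin m → ℝ :=
  fun i q => clamp (w i q + γ i q * (f i q - maxErase i (fun j => f j q * w j q)))

/-!
Let `c = γlow * δ`. As long as the dominating agent's weight is below `1`, the margin `δ`
guarantees that its gradient is at least `c`: the rivals' weighted rewards never exceed their
rewards. So after `T = ⌈1 / c⌉` steps this weight is clamped at `1`, and from then on every rival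
faces the full reward of the dominating agent, which makes its gradient at most `-c`; after `T`
further steps all rival weights are clamped at `0`.
-/

lemma fsMax_eq_max' {s : Finset ℝ} (h : s.Nonempty) : fsMax s = s.max' h := by
  rw [fsMax, ← coe_max' h, WithBot.unbotD_coe]

lemma fsMin_eq_min' {s : Finset ℝ} (h : s.Nonempty) : fsMin s = s.min' h := by
  rw [fsMin, ← coe_min' h, WithTop.untopD_coe]

lemma le_fsMax {s : Finset ℝ} {a : ℝ} (h : a ∈ s) : a ≤ fsMax s := by
  rw [fsMax_eq_max' ⟨a, h⟩]
  exact le_max' s a h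

lemma fsMax_le {s : Finset ℝ} {c : ℝ} (h : s.Nonempty) (hc : ∀ x ∈ s, x ≤ c) :
    fsMax s ≤ c := by
  rw [fsMax_eq_max' h]
  exact max'_le s h c hc

lemma fsMin_le {s : Finset ℝ} {a : ℝ} (h : a ∈ s) : fsMin s ≤ a := by
  rw [fsMin_eq_min' ⟨a, h⟩]
  exact min'_le s a h

section maxErase

variable {n : ℕ} {i : Fin n} {g h : Fin n → ℝ}

lemma le_maxErase {j : Fin n} (hj : j ≠ i) : g j ≤ maxErase i g :=
  le_fsMax (mem_image_of_mem g (mem_erase.2 ⟨hj, mem_univ j⟩))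

lemma maxErase_mono (hgh : ∀ j, j ≠ i → g j ≤ h j) : maxErase i g ≤ maxErase i h := by
  rcases ((univ : Finset (Fin n)).erase i).eq_empty_or_nonempty with hempty | hne
  · simp [maxErase, hempty]
  · refine fsMax_le (hne.image g) ?_
    rintro _ hx
    obtain ⟨j, hj, rfl⟩ := mem_image.1 hx
    exact (hgh j (mem_erase.1 hj).1).trans (le_maxErase (mem_erase.1 hj).1)

end maxErase

lemma clamp_mem_Icc (x : ℝ) : clamp x ∈ Set.Icc 0 1 :=
  ⟨le_max_left _ _, max_le zero_le_one (min_le_right _ _)⟩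

lemma min_one_le_clamp (x : ℝ) : min 1 x ≤ clamp x :=
  (min_comm 1 x).le.trans (le_max_right _ _)

lemma clamp_le_max_zero (x : ℝ) : clamp x ≤ max 0 x :=
  max_le_max le_rfl (min_le_left _ _)

section pbrag

variable {n m : ℕ} {f γ w : Fin n → Fin m → ℝ} {i j : Fin n} {q : Fin m} {c : ℝ}

lemma inUnit_pbrag : InUnit (pbrag f γ w) :=
  fun _ _ => clamp_mem_Icc _

lemma min_one_add_le_pbrag (hf : ∀ j, 0 ≤ f j q) (hw : InUnit w) (hγ : 0 ≤ γ i q)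
    (hc : c ≤ γ i q * (f i q - maxErase i (fun j => f j q))) :
    min 1 (w i q + c) ≤ pbrag f γ w i q := by
  have hmax : maxErase i (fun j => f j q * w j q) ≤ maxErase i (fun j => f j q) :=
    maxErase_mono fun j _ => mul_le_of_le_one_right (hf j) (hw j q).2
  have hgrad : c ≤ γ i q * (f i q - maxErase i (fun j => f j q * w j q)) :=
    hc.trans (by gcongr)
  exact (min_le_min_left 1 (by linarith)).trans (min_one_le_clamp _)

lemma pbrag_le_max_zero_sub (hj : j ≠ i) (hi : w i q = 1) (hγ : 0 ≤ γ j q)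
    (hc : c ≤ γ j q * (f i q - f j q)) :
    pbrag f γ w j q ≤ max 0 (w j q - c) := by
  have hmax : f i q ≤ maxErase j (fun k => f k q * w k q) := by
    simpa [hi] using le_maxErase (g := fun k => f k q * w k q) (Ne.symm hj)
  have hgrad : γ j q * (f j q - maxErase j (fun k => f k q * w k q)) ≤ -c := by
    have : γ j q * (f j q - maxErase j (fun k => f k q * w k q)) ≤ γ j q * (f j q - f i q) := by
      gcongr
    linarith
  exact (clamp_le_max_zero _).trans (max_le_max le_rfl (by linarith))

end pbrag

section sequences

variable {a : ℕ → ℝ} {c : ℝ} {T t : ℕ}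

lemma min_one_mul_le_of_min_one_add_le (hc : 0 ≤ c) (h0 : 0 ≤ a 0)
    (hstep : ∀ t, min 1 (a t + c) ≤ a (t + 1)) (t : ℕ) : min 1 (t * c) ≤ a t := by
  induction t with
  | zero => simpa using h0
  | succ t ih =>
    calc min 1 (((t + 1 : ℕ) : ℝ) * c) ≤ min 1 (min 1 (t * c) + c) := ?_
      _ ≤ min 1 (a t + c) := by gcongr
      _ ≤ a (t + 1) := hstep t
    rcases le_total (t * c) 1 with h | h
    · rw [min_eq_right h, Nat.cast_succ, add_one_mul]
    · rw [min_eq_left h]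
      exact le_min (min_le_left _ _) ((min_le_left _ _).trans (by linarith))

lemma le_max_zero_one_sub_mul_of_le_max_zero_sub (hc : 0 ≤ c) (h0 : a 0 ≤ 1)
    (hstep : ∀ t, a (t + 1) ≤ max 0 (a t - c)) (t : ℕ) : a t ≤ max 0 (1 - t * c) := by
  induction t with
  | zero => simpa using h0
  | succ t ih =>
    refine (hstep t).trans (max_le (le_max_left _ _) ?_)
    rcases le_total (1 - t * c) 0 with h | h
    · rw [max_eq_left h] at ih
      linarith [le_max_left 0 (1 - ((t + 1 : ℕ) : ℝ) * c)]
    · rw [max_eq_right h] at ih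
      push_cast
      linarith [le_max_right 0 (1 - ((t : ℝ) + 1) * c)]

lemma eq_one_of_min_one_add_le (hc : 0 ≤ c) (h0 : 0 ≤ a 0) (h1 : ∀ t, a t ≤ 1)
    (hstep : ∀ t, min 1 (a t + c) ≤ a (t + 1)) (hT : 1 ≤ T * c) (ht : T ≤ t) : a t = 1 := by
  have hle : (1 : ℝ) ≤ t * c := hT.trans (by gcongr)
  have := min_one_mul_le_of_min_one_add_le hc h0 hstep t
  rw [min_eq_left hle] at this
  exact (h1 t).antisymm this

lemma eq_zero_of_le_max_zero_sub (hc : 0 ≤ c) (h0 : a 0 ≤ 1) (hnonneg : ∀ t, 0 ≤ a t)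
    (hstep : ∀ t, a (t + 1) ≤ max 0 (a t - c)) (hT : 1 ≤ T * c) (ht : T ≤ t) : a t = 0 := by
  have hle : (1 : ℝ) ≤ t * c := hT.trans (by gcongr)
  have := le_max_zero_one_sub_mul_of_le_max_zero_sub hc h0 hstep t
  rw [max_eq_left (by linarith)] at this
  exact this.antisymm (hnonneg t)

end sequences

lemma exists_one_le_mul_of_two_mul_ceil_le {c : ℝ} (hc : 0 < c) {t : ℕ}
    (ht : 2 * ⌈1 / c⌉ ≤ (t : ℤ)) : ∃ T : ℕ, 1 ≤ T * c ∧ 2 * T ≤ t := by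
  refine ⟨⌈1 / c⌉₊, ?_, ?_⟩
  · exact (div_le_iff₀ hc).1 (Nat.le_ceil _)
  · rw [← Int.natCast_ceil_eq_ceil (by positivity)] at ht
    exact_mod_cast ht

theorem pbrag_finite_time_convergence_general {n m : ℕ} (f : Fin n → Fin m → ℝ)
    (hf : ∀ i q, 0 ≤ f i q)
    (istar : Fin m → Fin n)
    (γ : Fin n → Fin m → ℝ)
    (γlow : ℝ)
    (hγlow : γlow = fsMin (Finset.univ.image (fun p : Fin n × Fin m => γ p.1 p.2)))
    (hγlowpos : 0 < γlow)
    (δ : ℝ)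
    (hδ : δ = fsMin (Finset.univ.image
      (fun q => f (istar q) q - maxErase (istar q) (fun j => f j q))))
    (hδpos : 0 < δ)
    (W : ℕ → Fin n → Fin m → ℝ)
    (hW0 : InUnit (W 0)) (hWs : ∀ t, W (t + 1) = pbrag f γ (W t)) :
    ∀ (i : Fin n) (q : Fin m) (t : ℕ), 2 * ⌈1 / (γlow * δ)⌉ ≤ (t : ℤ) →
      W t i q = if i = istar q then 1 else 0 := by
  intro i q t ht
  have hc : 0 < γlow * δ := mul_pos hγlowpos hδpos
  have hγle : ∀ i q, γlow ≤ γ i q := fun i q =>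
    hγlow ▸ fsMin_le (mem_image_of_mem _ (mem_univ (i, q)))
  have hγ : ∀ i q, 0 ≤ γ i q := fun i q => hγlowpos.le.trans (hγle i q)
  have hδle : δ ≤ f (istar q) q - maxErase (istar q) (fun j => f j q) :=
    hδ ▸ fsMin_le (mem_image_of_mem _ (mem_univ q))
  have hunit : ∀ t, InUnit (W t) := by
    rintro (_ | t)
    exacts [hW0, hWs t ▸ inUnit_pbrag]
  obtain ⟨T, hT, hTt⟩ := exists_one_le_mul_of_two_mul_ceil_le hc ht
  have hwin : ∀ t, T ≤ t → W t (istar q) q = 1 := fun t =>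
    eq_one_of_min_one_add_le hc.le (hunit 0 _ _).1 (fun t => (hunit t _ _).2)
      (fun t => hWs t ▸ min_one_add_le_pbrag (fun j => hf j q) (hunit t) (hγ _ _)
        (mul_le_mul (hγle _ _) hδle hδpos.le (hγ _ _))) hT
  by_cases hi : i = istar q
  · rw [if_pos hi, hi]
    exact hwin t (by omega)
  · rw [if_neg hi]
    have hgap : δ ≤ f (istar q) q - f i q := by
      linarith [le_maxErase (g := fun j => f j q) hi]
    obtain ⟨s, rfl⟩ : ∃ s, t = T + s := ⟨t - T, by omega⟩
    exact eq_zero_of_le_max_zero_sub (a := fun s => W (T + s) i q) hc.le (hunit _ _ _).2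
      (fun s => (hunit _ _ _).1)
      (fun s => hWs (T + s) ▸ pbrag_le_max_zero_sub hi (hwin _ (by omega)) (hγ _ _)
        (mul_le_mul (hγle _ _) hgap hδpos.le (hγ _ _))) hT (by omega)

theorem pbrag_finite_time_convergence {n m : ℕ} (hn : 2 ≤ n) (f : Fin n → Fin m → ℝ)
    (hf : ∀ i q, 0 ≤ f i q)
    (istar : Fin m → Fin n)
    (hstar : ∀ q, ∀ j, j ≠ istar q → f j q < f (istar q) q)
    (γ : Fin n → Fin m → ℝ) (hγ : ∀ i q, 0 < γ i q)
    (γlow : ℝ)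
    (hγlow : γlow = fsMin (Finset.univ.image (fun p : Fin n × Fin m => γ p.1 p.2)))
    (hγlowpos : 0 < γlow)
    (δ : ℝ)
    (hδ : δ = fsMin (Finset.univ.image
      (fun q => f (istar q) q - maxErase (istar q) (fun j => f j q))))
    (hδpos : 0 < δ)
    (W : ℕ → Fin n → Fin m → ℝ)
    (hW0 : InUnit (W 0)) (hWs : ∀ t, W (t + 1) = pbrag f γ (W t)) :
    ∀ (i : Fin n) (q : Fin m) (t : ℕ), 2 * ⌈1 / (γlow * δ)⌉ ≤ (t : ℤ) →
      W t i q = if i = istar q then 1 else 0 :=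
  pbrag_finite_time_convergence_general f hf istar γ γlow hγlow hγlowpos δ hδ hδpos W hW0 hWs
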